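/- Let A and L be positive bounded operators on a real separable Hilbert space H and λ > 0. If ‖(L + λI)^{-1/2}(L − A)(L + λI)^{-1/2}‖ ≤ 1/4 and ‖(L + λI)^{1/2}(A + λI)^{-1/2}‖ ≤ √2, then ‖(A + λI)^{1/2}(L + λI)^{-1}(A + λI)^{1/2}‖ ≤ 2 and consequently ‖(L + λI)^{-1/2}(A + λI)^{1/2}‖ ≤ √2. -/

import Mathlib

/-!
Put `X = (L + λ)^{-1/2} (A + λ)^{1/2}`. Then `X X* = (L + λ)^{-1/2} (A + λ) (L + λ)^{-1/2}
= I - (L + λ)^{-1/2} (L - A) (L + λ)^{-1/2}` has norm at most `1 + 1/4`, while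
`X* X = (A + λ)^{1/2} (L + λ)⁻¹ (A + λ)^{1/2}`. By the C*-identity both have norm `‖X‖²`.
-/

open ContinuousLinearMap

def IsSqrtOf {E : Type*} [NormedAddCommGroup E] [InnerProductSpace ℝ E]
    [CompleteSpace E] (S T : E →L[ℝ] E) : Prop :=
  S.IsPositive ∧ S ∘L S = T

def IsInvOf {E : Type*} [NormedAddCommGroup E] [InnerProductSpace ℝ E]
    [CompleteSpace E] (S T : E →L[ℝ] E) : Prop :=
  S ∘L T = 1 ∧ T ∘L S = 1

def IsInvSqrtOf {E : Type*} [NormedAddCommGroup E] [InnerProductSpace ℝ E]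
    [CompleteSpace E] (S T : E →L[ℝ] E) : Prop :=
  S.IsPositive ∧ IsInvOf (S ∘L S) T

def IsPowerFamilyOf {E : Type*} [NormedAddCommGroup E] [InnerProductSpace ℝ E]
    [CompleteSpace E] (A : E →L[ℝ] E) (p : ℝ → E →L[ℝ] E) : Prop :=
  p 0 = 1 ∧ p 1 = A ∧ (∀ s t : ℝ, 0 ≤ s → 0 ≤ t → p (s + t) = p s ∘L p t) ∧
    (∀ t : ℝ, 0 ≤ t → (p t).IsPositive) ∧ ContinuousOn p (Set.Ici (0 : ℝ))

section InverseSquareRoot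

variable {E : Type*} [NormedAddCommGroup E] [InnerProductSpace ℝ E] [CompleteSpace E]
  {P Q S T : E →L[ℝ] E}

theorem IsInvOf.unique (hP : IsInvOf P T) (hQ : IsInvOf Q T) : P = Q :=
  left_inv_eq_right_inv hP.1 hQ.2

theorem IsInvOf.comp_comp_eq_one (hS : IsInvOf (S ∘L S) T) : S ∘L T ∘L S = 1 := by
  let u : (E →L[ℝ] E)ˣ := ⟨S ∘L S, T, hS.1, hS.2⟩
  have hcomm : Commute S T :=
    Commute.units_inv_right (u := u) ((Commute.refl S).mul_right (Commute.refl S))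
  calc S ∘L T ∘L S = S * (S * T) := congrArg (S * ·) hcomm.eq.symm
    _ = 1 := (mul_assoc S S T).symm.trans hS.1

theorem IsInvOf.comp_sub_comp (hS : IsInvOf (S ∘L S) T) (D : E →L[ℝ] E) :
    S ∘L (T - D) ∘L S = 1 - S ∘L D ∘L S := by
  rw [sub_comp, comp_sub, hS.comp_comp_eq_one]

end InverseSquareRoot

section CStarIdentity

variable {𝕜 E : Type*} [RCLike 𝕜] [NormedAddCommGroup E] [InnerProductSpace 𝕜 E]
  [CompleteSpace E] {R S : E →L[𝕜] E}

theorem IsSelfAdjoint.norm_comp_sq (hR : IsSelfAdjoint R) (hS : IsSelfAdjoint S) :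
    ‖S ∘L R‖ ^ 2 = ‖R ∘L (S ∘L S) ∘L R‖ := by
  rw [sq, ← norm_adjoint_comp_self, adjoint_comp, hR.adjoint_eq, hS.adjoint_eq]
  rfl

theorem IsSelfAdjoint.norm_conj_sq_swap (hR : IsSelfAdjoint R) (hS : IsSelfAdjoint S) :
    ‖R ∘L (S ∘L S) ∘L R‖ = ‖S ∘L (R ∘L R) ∘L S‖ := by
  have hadj : adjoint (S ∘L R) = R ∘L S := by
    rw [adjoint_comp, hR.adjoint_eq, hS.adjoint_eq]
  rw [← hR.norm_comp_sq hS, ← hS.norm_comp_sq hR, ← hadj, LinearIsometryEquiv.norm_map]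

end CStarIdentity

theorem stmt10_general {H : Type*} [NormedAddCommGroup H] [InnerProductSpace ℝ H] [CompleteSpace H]
    (A L : H →L[ℝ] H)
    (lam : ℝ)
    (SA : H →L[ℝ] H) (hSA : IsSqrtOf SA (A + lam • (1 : H →L[ℝ] H)))
    (SLinv : H →L[ℝ] H) (hSLinv : IsInvSqrtOf SLinv (L + lam • (1 : H →L[ℝ] H)))
    (Linv : H →L[ℝ] H) (hLinv : IsInvOf Linv (L + lam • (1 : H →L[ℝ] H)))
    (h1 : ‖SLinv ∘L (L - A) ∘L SLinv‖ ≤ 1 / 4) :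
    ‖SA ∘L Linv ∘L SA‖ ≤ 2 ∧ ‖SLinv ∘L SA‖ ≤ Real.sqrt 2 := by
  have hLinv_eq : Linv = SLinv ∘L SLinv := hLinv.unique hSLinv.2
  have hconj : SLinv ∘L (A + lam • 1) ∘L SLinv = 1 - SLinv ∘L (L - A) ∘L SLinv := by
    rw [← hSLinv.2.comp_sub_comp]
    congr 2
    abel
  have hbound : ‖SA ∘L Linv ∘L SA‖ ≤ 2 := by
    rw [hLinv_eq, hSA.1.isSelfAdjoint.norm_conj_sq_swap hSLinv.1.isSelfAdjoint, hSA.2, hconj]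
    calc ‖1 - SLinv ∘L (L - A) ∘L SLinv‖ ≤ ‖(1 : H →L[ℝ] H)‖ + ‖SLinv ∘L (L - A) ∘L SLinv‖ :=
          norm_sub_le _ _
      _ ≤ 1 + 1 / 4 := add_le_add norm_id_le h1
      _ ≤ 2 := by norm_num
  refine ⟨hbound, ?_⟩
  rw [Real.le_sqrt (norm_nonneg _) zero_le_two,
    hSA.1.isSelfAdjoint.norm_comp_sq hSLinv.1.isSelfAdjoint, ← hLinv_eq]
  exact hbound

/-- For positive operators `A`, `L` on `H` and `lam > 0`, if
`‖(L + lam I)^{-1/2}(L − A)(L + lam I)^{-1/2}‖ ≤ 1/4` and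
`‖(L + lam I)^{1/2}(A + lam I)^{-1/2}‖ ≤ √2`, then
`‖(A + lam I)^{1/2}(L + lam I)⁻¹(A + lam I)^{1/2}‖ ≤ 2` and consequently
`‖(L + lam I)^{-1/2}(A + lam I)^{1/2}‖ ≤ √2`. -/
theorem stmt10 {H : Type*} [NormedAddCommGroup H] [InnerProductSpace ℝ H] [CompleteSpace H]
    [TopologicalSpace.SeparableSpace H]
    (A L : H →L[ℝ] H) (hA : A.IsPositive) (hL : L.IsPositive)
    (lam : ℝ) (hlam : 0 < lam)
    (SA : H →L[ℝ] H) (hSA : IsSqrtOf SA (A + lam • (1 : H →L[ℝ] H)))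
    (SAinv : H →L[ℝ] H) (hSAinv : IsInvSqrtOf SAinv (A + lam • (1 : H →L[ℝ] H)))
    (SL : H →L[ℝ] H) (hSL : IsSqrtOf SL (L + lam • (1 : H →L[ℝ] H)))
    (SLinv : H →L[ℝ] H) (hSLinv : IsInvSqrtOf SLinv (L + lam • (1 : H →L[ℝ] H)))
    (Linv : H →L[ℝ] H) (hLinv : IsInvOf Linv (L + lam • (1 : H →L[ℝ] H)))
    (h1 : ‖SLinv ∘L (L - A) ∘L SLinv‖ ≤ 1 / 4)
    (h2 : ‖SL ∘L SAinv‖ ≤ Real.sqrt 2) :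
    ‖SA ∘L Linv ∘L SA‖ ≤ 2 ∧ ‖SLinv ∘L SA‖ ≤ Real.sqrt 2 :=
  stmt10_general A L lam SA hSA SLinv hSLinv Linv hLinv h1
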